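/- Let A := c · O⁻¹ R⁻¹ O K O, where c ∈ ℂ is purely imaginary nonzero, O is an invertible real diagonal matrix, and R, K are commuting Hermitian positive definite matrices. Then A is similar to i times a Hermitian matrix, and hence all eigenvalues of A are purely imaginary. -/

import Mathlib

/-!
Write `R = T²` and `K = S²` with `T, S` the positive square roots; `T` commutes with `K` because
`R` does. Conjugating by `Q = S T O` turns `O⁻¹ R⁻¹ O K O` into `S T⁻¹ O T⁻¹ S`, which is Hermitian
since `O`, `S`, `T` are. Hence `c • O⁻¹ R⁻¹ O K O` is similar to `i • (t S T⁻¹ O T⁻¹ S)`, and the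
eigenvalues of a Hermitian matrix are real.
-/

open scoped ComplexOrder MatrixOrder
open Matrix

variable {n : Type*}

theorem Matrix.IsDiag.isHermitian_of_im_eq_zero [DecidableEq n] {O : Matrix n n ℂ}
    (hO : O.IsDiag) (him : ∀ i, (O i i).im = 0) : O.IsHermitian := by
  rw [← hO.diagonal_diag]
  exact isHermitian_diagonal_of_self_adjoint _ (funext fun i => Complex.conj_eq_iff_im.mpr (him i))

theorem Matrix.mulVec_mulVec_eq_smul_of_mul_eq_mul {α m : Type*} [CommSemiring α] [Fintype n]
    [Fintype m] {A : Matrix n n α} {B : Matrix m m α} {Q : Matrix m n α} (h : Q * A = B * Q)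
    {μ : α} {v : n → α} (hv : A *ᵥ v = μ • v) : B *ᵥ (Q *ᵥ v) = μ • (Q *ᵥ v) := by
  rw [mulVec_mulVec, ← h, ← mulVec_mulVec, hv, mulVec_smul]

variable [Fintype n] [DecidableEq n]

theorem Matrix.conj_eq_of_mul_self_eq {α : Type*} [CommRing α] {O R K T S : Matrix n n α}
    (hO : IsUnit O) (hT : IsUnit T) (hS : IsUnit S) (hTR : T * T = R) (hSK : S * S = K)
    (hKT : Commute K T) :
    (S * T * O) * (O⁻¹ * R⁻¹ * O * K * O) * (S * T * O)⁻¹ = S * T⁻¹ * O * T⁻¹ * S := by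
  subst hTR hSK
  rw [isUnit_iff_isUnit_det] at hO hT hS
  have hK : T⁻¹ * (S * S) * T = S * S := by
    rw [Matrix.mul_assoc, hKT.eq, ← Matrix.mul_assoc, nonsing_inv_mul _ hT, Matrix.one_mul]
  have hintertwine : (S * T * O) * (O⁻¹ * (T * T)⁻¹ * O * (S * S) * O) =
      (S * T⁻¹ * O * T⁻¹ * S) * (S * T * O) := calc
    _ = S * (T * (O * O⁻¹) * T⁻¹) * T⁻¹ * O * (S * S) * O := by
      simp only [Matrix.mul_inv_rev, Matrix.mul_assoc]
    _ = S * T⁻¹ * O * (T⁻¹ * (S * S) * T) * O := by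
      rw [mul_nonsing_inv O hO, Matrix.mul_one, mul_nonsing_inv T hT, Matrix.mul_one, hK]
    _ = (S * T⁻¹ * O * T⁻¹ * S) * (S * T * O) := by simp only [Matrix.mul_assoc]
  rw [hintertwine, mul_nonsing_inv_cancel_right _ _ (by simp only [det_mul, hS.mul hT |>.mul hO])]

theorem Matrix.exists_isUnit_conj_eq_isHermitian {𝕜 : Type*} [RCLike 𝕜] {O R K : Matrix n n 𝕜}
    (hO : O.IsHermitian) (hOu : IsUnit O) (hR : R.PosDef) (hK : K.PosDef) (hRK : Commute R K) :
    ∃ Q H : Matrix n n 𝕜, IsUnit Q ∧ H.IsHermitian ∧ Q * (O⁻¹ * R⁻¹ * O * K * O) * Q⁻¹ = H := by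
  have hT : IsUnit (CFC.sqrt R) := (CFC.isUnit_sqrt_iff R hR.posSemidef.nonneg).mpr hR.isUnit
  have hS : IsUnit (CFC.sqrt K) := (CFC.isUnit_sqrt_iff K hK.posSemidef.nonneg).mpr hK.isUnit
  have hKT : Commute K (CFC.sqrt R) := by
    rw [CFC.sqrt_eq_cfc]
    exact (hRK.cfc_nnreal _).symm
  refine ⟨_, _, (hS.mul hT).mul hOu, ?_, conj_eq_of_mul_self_eq hOu hT hS
    (CFC.sqrt_mul_sqrt_self R hR.posSemidef.nonneg) (CFC.sqrt_mul_sqrt_self K hK.posSemidef.nonneg)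
    hKT⟩
  have hTinv : (CFC.sqrt R)⁻¹.IsHermitian := IsHermitian.inv (CFC.sqrt_nonneg R).isSelfAdjoint
  have hS' : (CFC.sqrt K).IsHermitian := (CFC.sqrt_nonneg K).isSelfAdjoint
  have hE := isHermitian_conjTranspose_mul_mul (CFC.sqrt K)
    (isHermitian_conjTranspose_mul_mul (CFC.sqrt R)⁻¹ hO)
  rw [hS'.eq, hTinv.eq] at hE
  simpa only [Matrix.mul_assoc] using hE

theorem Matrix.IsHermitian.conj_eq_self_of_mulVec_eq_smul {𝕜 : Type*} [RCLike 𝕜]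
    {H : Matrix n n 𝕜} (hH : H.IsHermitian) {μ : 𝕜} {v : n → 𝕜} (hv : v ≠ 0)
    (hHv : H *ᵥ v = μ • v) : starRingEnd 𝕜 μ = μ := by
  refine (isSymmetric_toEuclideanLin_iff.mpr hH).conj_eigenvalue_eq_self
    (Module.End.hasEigenvalue_of_hasEigenvector (x := WithLp.toLp 2 v) ⟨?_, by simpa using hv⟩)
  rw [Module.End.mem_eigenspace_iff, toLpLin_apply]
  simp [hHv]

theorem Matrix.IsHermitian.re_eq_zero_of_conj_eq_I_smul {A Q H : Matrix n n ℂ} (hQ : IsUnit Q)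
    (hH : H.IsHermitian) (hconj : Q * A * Q⁻¹ = Complex.I • H) {μ : ℂ} {v : n → ℂ}
    (hv : v ≠ 0) (hAv : A *ᵥ v = μ • v) : μ.re = 0 := by
  have hQv : Q *ᵥ v ≠ 0 := fun h0 =>
    hv (mulVec_injective_iff_isUnit.mpr hQ (by rw [h0, mulVec_zero]))
  have hintertwine : Q * A = (Complex.I • H) * Q := by
    rw [← hconj, nonsing_inv_mul_cancel_right _ _ (isUnit_iff_isUnit_det Q |>.mp hQ)]
  have hHQv : H *ᵥ (Q *ᵥ v) = (-Complex.I * μ) • (Q *ᵥ v) := by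
    rw [mul_smul, ← mulVec_mulVec_eq_smul_of_mul_eq_mul hintertwine hAv, smul_mulVec,
      smul_smul]
    simp
  simpa using Complex.conj_eq_iff_im.mp (hH.conj_eq_self_of_mulVec_eq_smul hQv hHQv)

theorem A_similar_to_i_hermitian_and_spectrum_imaginary_general
    {n : ℕ} (O R K : Matrix (Fin n) (Fin n) ℂ) (c : ℂ) (t : ℝ)
    (hc : c = Complex.I * t)
    (hdiag : O.IsDiag) (hreal : ∀ i, (O i i).im = 0) (hO : IsUnit O)
    (hR : R.PosDef) (hK : K.PosDef) (hcomm : R * K = K * R) :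
    (∃ (Q H : Matrix (Fin n) (Fin n) ℂ), IsUnit Q ∧ H.IsHermitian ∧
        Q * (c • (O⁻¹ * R⁻¹ * O * K * O)) * Q⁻¹ = Complex.I • H) ∧
      (∀ (μ : ℂ) (v : Fin n → ℂ), v ≠ 0 →
        (c • (O⁻¹ * R⁻¹ * O * K * O)).mulVec v = μ • v → μ.re = 0) := by
  obtain ⟨Q, H, hQ, hH, hQH⟩ :=
    exists_isUnit_conj_eq_isHermitian (hdiag.isHermitian_of_im_eq_zero hreal) hO hR hK hcomm
  have htH : ((t : ℂ) • H).IsHermitian := hH.smul (Complex.conj_ofReal t)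
  have hconj : Q * (c • (O⁻¹ * R⁻¹ * O * K * O)) * Q⁻¹ = Complex.I • ((t : ℂ) • H) := by
    rw [Matrix.mul_smul, Matrix.smul_mul, hQH, hc, smul_smul]
  exact ⟨⟨Q, _, hQ, htH, hconj⟩, fun μ v hv hAv => htH.re_eq_zero_of_conj_eq_I_smul hQ hconj hv hAv⟩

/-- Let `A := c • O⁻¹ R⁻¹ O K O`, where `c = i t` is purely imaginary nonzero, `O` is an
invertible real diagonal matrix, and `R`, `K` are commuting Hermitian positive definite
matrices. Then `A` is similar to `i` times a Hermitian matrix, and hence all eigenvalues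
of `A` are purely imaginary. -/
theorem A_similar_to_i_hermitian_and_spectrum_imaginary
    {n : ℕ} (O R K : Matrix (Fin n) (Fin n) ℂ) (c : ℂ) (t : ℝ)
    (ht : t ≠ 0) (hc : c = Complex.I * t)
    (hdiag : O.IsDiag) (hreal : ∀ i, (O i i).im = 0) (hO : IsUnit O)
    (hR : R.PosDef) (hK : K.PosDef) (hcomm : R * K = K * R) :
    (∃ (Q H : Matrix (Fin n) (Fin n) ℂ), IsUnit Q ∧ H.IsHermitian ∧
        Q * (c • (O⁻¹ * R⁻¹ * O * K * O)) * Q⁻¹ = Complex.I • H) ∧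
      (∀ (μ : ℂ) (v : Fin n → ℂ), v ≠ 0 →
        (c • (O⁻¹ * R⁻¹ * O * K * O)).mulVec v = μ • v → μ.re = 0) :=
  A_similar_to_i_hermitian_and_spectrum_imaginary_general O R K c t hc hdiag hreal hO hR hK hcomm
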